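/- The Dunkl operators D_i = ∂_i + g Δ_i (for any fixed g ∈ ℝ) pairwise commute: [D_i, D_j] = 0 for all i, j. -/

import Mathlib

open Finset

noncomputable section

/-- The open set of points with pairwise distinct coordinates. -/
def Omega (N : ℕ) : Set (Fin N → ℝ) := {x | Function.Injective x}

/-- The coordinate-swap (transposition) operator `P_{ij}`. -/
def Pswap {N : ℕ} (i j : Fin N) (f : (Fin N → ℝ) → ℝ) : (Fin N → ℝ) → ℝ :=
  fun x => f (x ∘ Equiv.swap i j)

/-- The difference operator `Δ_i = ∑_{j ≠ i} (x_i - x_j)⁻¹ (1 - P_{ij})`. -/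
def Delta {N : ℕ} (i : Fin N) (f : (Fin N → ℝ) → ℝ) : (Fin N → ℝ) → ℝ :=
  fun x => ∑ j ∈ Finset.univ.erase i, (f x - f (x ∘ Equiv.swap i j)) / (x i - x j)

/-- The partial derivative operator `∂_i`. -/
def pd {N : ℕ} (i : Fin N) (f : (Fin N → ℝ) → ℝ) : (Fin N → ℝ) → ℝ :=
  fun x => fderiv ℝ f x (Pi.single i 1)

/-- Multiplication by the `i`-th coordinate. -/
def xmul {N : ℕ} (i : Fin N) (f : (Fin N → ℝ) → ℝ) : (Fin N → ℝ) → ℝ :=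
  fun x => x i * f x

/-- The Dunkl operator `D_i = ∂_i + g Δ_i`. -/
def Dunkl {N : ℕ} (g : ℝ) (i : Fin N) (f : (Fin N → ℝ) → ℝ) : (Fin N → ℝ) → ℝ :=
  fun x => pd i f x + g * Delta i f x

variable {N : ℕ}

def permCLM (σ : Equiv.Perm (Fin N)) : (Fin N → ℝ) →L[ℝ] (Fin N → ℝ) :=
  ContinuousLinearMap.pi (fun m => ContinuousLinearMap.proj (σ m))

@[simp] lemma permCLM_apply (σ : Equiv.Perm (Fin N)) (x : Fin N → ℝ) :
    permCLM σ x = x ∘ σ := rfl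

lemma isOpen_Omega : IsOpen (Omega N) := by
  have : Omega N = ⋂ (p : Fin N × Fin N) (_ : p.1 ≠ p.2), {x : Fin N → ℝ | x p.1 ≠ x p.2} := by
    ext x
    simp only [Set.mem_iInter, Set.mem_setOf_eq, Omega]
    constructor
    · intro h p hp hxe; exact hp (h hxe)
    · intro h a b hab
      by_contra hne
      exact h (a, b) hne hab
  rw [this]
  refine isOpen_iInter_of_finite fun p => isOpen_iInter_of_finite fun hp => ?_
  exact IsOpen.preimage (by fun_prop : Continuous fun x : Fin N → ℝ => (x p.1, x p.2))
    (isOpen_ne_fun continuous_fst continuous_snd)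

lemma comp_mem_Omega {x : Fin N → ℝ} (hx : x ∈ Omega N) (σ : Equiv.Perm (Fin N)) :
    x ∘ σ ∈ Omega N := hx.comp σ.injective

lemma single_comp_swap (i a b : Fin N) :
    (Pi.single i (1:ℝ)) ∘ (Equiv.swap a b) = Pi.single (Equiv.swap a b i) 1 := by
  funext m
  simp only [Function.comp_apply, Pi.single_apply]
  congr 1
  rw [eq_iff_iff, Equiv.swap_apply_eq_iff]

variable {f : (Fin N → ℝ) → ℝ}

lemma contDiffAt_of_mem (hf : ContDiffOn ℝ (⊤ : ℕ∞) f (Omega N)) {x : Fin N → ℝ} (hx : x ∈ Omega N) :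
    ContDiffAt ℝ (⊤ : ℕ∞) f x :=
  hf.contDiffAt (isOpen_Omega.mem_nhds hx)

lemma diffAt_of_mem (hf : ContDiffOn ℝ (⊤ : ℕ∞) f (Omega N)) {x : Fin N → ℝ} (hx : x ∈ Omega N) :
    DifferentiableAt ℝ f x :=
  (contDiffAt_of_mem hf hx).differentiableAt (by simp)

lemma coord_ne {x : Fin N → ℝ} (hx : x ∈ Omega N) {a b : Fin N} (h : a ≠ b) :
    x a - x b ≠ 0 :=
  sub_ne_zero_of_ne (fun he => h (hx he))

/-- The explicit derivative of one summand of `Delta`. -/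
def DeltaTermDeriv (j k : Fin N) (f : (Fin N → ℝ) → ℝ) (x : Fin N → ℝ) :
    (Fin N → ℝ) →L[ℝ] ℝ :=
  (f x - f (x ∘ Equiv.swap j k)) •
      ((-((x j - x k) ^ 2)⁻¹) •
        ((ContinuousLinearMap.proj j : (Fin N → ℝ) →L[ℝ] ℝ) -
         (ContinuousLinearMap.proj k : (Fin N → ℝ) →L[ℝ] ℝ))) +
    (x j - x k)⁻¹ •
      (fderiv ℝ f x - (fderiv ℝ f (x ∘ Equiv.swap j k)).comp (permCLM (Equiv.swap j k)))

lemma hasFDerivAt_DeltaTerm (hf : ContDiffOn ℝ (⊤ : ℕ∞) f (Omega N)) {x : Fin N → ℝ} (hx : x ∈ Omega N) {j k : Fin N} (hkj : k ≠ j) :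
    HasFDerivAt (fun y => (f y - f (y ∘ Equiv.swap j k)) / (y j - y k))
      (DeltaTermDeriv j k f x) x := by
  have hne : x j - x k ≠ 0 := coord_ne hx hkj.symm
  have h1 : HasFDerivAt f (fderiv ℝ f x) x := (diffAt_of_mem hf hx).hasFDerivAt
  have h2 : HasFDerivAt (fun y : Fin N → ℝ => f (y ∘ Equiv.swap j k))
      ((fderiv ℝ f (x ∘ Equiv.swap j k)).comp (permCLM (Equiv.swap j k))) x :=
    ((diffAt_of_mem hf (comp_mem_Omega hx _)).hasFDerivAt).comp x
      (permCLM (Equiv.swap j k)).hasFDerivAt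
  have h4 : HasFDerivAt (fun y : Fin N → ℝ => y j - y k)
      ((ContinuousLinearMap.proj j : (Fin N → ℝ) →L[ℝ] ℝ) -
       (ContinuousLinearMap.proj k : (Fin N → ℝ) →L[ℝ] ℝ)) x := by
    exact ((ContinuousLinearMap.proj j : (Fin N → ℝ) →L[ℝ] ℝ) -
      (ContinuousLinearMap.proj k : (Fin N → ℝ) →L[ℝ] ℝ)).hasFDerivAt
  have h5 : HasFDerivAt (fun y : Fin N → ℝ => (y j - y k)⁻¹)
      ((-((x j - x k) ^ 2)⁻¹) •
        ((ContinuousLinearMap.proj j : (Fin N → ℝ) →L[ℝ] ℝ) -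
         (ContinuousLinearMap.proj k : (Fin N → ℝ) →L[ℝ] ℝ))) x :=
    (hasDerivAt_inv hne).comp_hasFDerivAt x h4
  have h6 := (h1.fun_sub h2).fun_mul h5
  simpa [div_eq_mul_inv, DeltaTermDeriv] using h6

lemma hasFDerivAt_Delta (hf : ContDiffOn ℝ (⊤ : ℕ∞) f (Omega N)) {x : Fin N → ℝ} (hx : x ∈ Omega N) (j : Fin N) :
    HasFDerivAt (Delta j f) (∑ k ∈ Finset.univ.erase j, DeltaTermDeriv j k f x) x := by
  exact HasFDerivAt.fun_sum fun k hk =>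
    hasFDerivAt_DeltaTerm hf hx (Finset.ne_of_mem_erase hk)

lemma le_top_aux1 : ((1 : ℕ∞) + 1 ≤ ((⊤ : ℕ∞) : WithTop ℕ∞)) := by exact_mod_cast le_top

lemma two_le_top : ((2 : WithTop ℕ∞) ≤ ((⊤ : ℕ∞) : WithTop ℕ∞)) := by
  rw [show ((2 : WithTop ℕ∞)) = ((2 : ℕ∞) : WithTop ℕ∞) by rfl]
  exact_mod_cast le_top

lemma differentiableAt_Delta (hf : ContDiffOn ℝ (⊤ : ℕ∞) f (Omega N))
    {x : Fin N → ℝ} (hx : x ∈ Omega N) (j : Fin N) :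
    DifferentiableAt ℝ (Delta j f) x :=
  (hasFDerivAt_Delta hf hx j).differentiableAt

lemma pd_Delta (hf : ContDiffOn ℝ (⊤ : ℕ∞) f (Omega N))
    {x : Fin N → ℝ} (hx : x ∈ Omega N) (i j : Fin N) :
    pd i (Delta j f) x = ∑ k ∈ Finset.univ.erase j,
      ((pd i f x - pd (Equiv.swap j k i) f (x ∘ Equiv.swap j k)) / (x j - x k)
        - (f x - f (x ∘ Equiv.swap j k)) * ((Pi.single i 1 : Fin N → ℝ) j - (Pi.single i 1 : Fin N → ℝ) k)
            / (x j - x k) ^ 2) := by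
  have h := hasFDerivAt_Delta hf hx j
  show fderiv ℝ (Delta j f) x (Pi.single i 1) = _
  rw [h.fderiv, ContinuousLinearMap.sum_apply]
  refine Finset.sum_congr rfl fun k hk => ?_
  have hsingle : (Pi.single i (1:ℝ)) ∘ (Equiv.swap j k) = Pi.single (Equiv.swap j k i) 1 :=
    single_comp_swap i j k
  simp only [DeltaTermDeriv, ContinuousLinearMap.add_apply, ContinuousLinearMap.smul_apply,
    ContinuousLinearMap.sub_apply, ContinuousLinearMap.proj_apply,
    ContinuousLinearMap.comp_apply, permCLM_apply, hsingle, pd, smul_eq_mul]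
  ring

lemma diffAt_pd (hf : ContDiffOn ℝ (⊤ : ℕ∞) f (Omega N))
    {x : Fin N → ℝ} (hx : x ∈ Omega N) (j : Fin N) :
    DifferentiableAt ℝ (pd j f) x := by
  have h2 : ContDiffAt ℝ 1 (fderiv ℝ f) x :=
    (contDiffAt_of_mem hf hx).fderiv_right le_top_aux1
  exact (h2.differentiableAt one_ne_zero).clm_apply (differentiableAt_const _)

lemma pd_pd (hf : ContDiffOn ℝ (⊤ : ℕ∞) f (Omega N))
    {x : Fin N → ℝ} (hx : x ∈ Omega N) (i j : Fin N) :
    pd i (pd j f) x = pd j (pd i f) x := by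
  have h2 : ContDiffAt ℝ 1 (fderiv ℝ f) x :=
    (contDiffAt_of_mem hf hx).fderiv_right le_top_aux1
  have hd : DifferentiableAt ℝ (fderiv ℝ f) x := h2.differentiableAt one_ne_zero
  have hsymm : IsSymmSndFDerivAt ℝ f x :=
    (contDiffAt_of_mem hf hx).isSymmSndFDerivAt (by simpa [minSmoothness_of_isRCLikeNormedField] using two_le_top)
  have key : ∀ a b : Fin N, pd a (pd b f) x
      = fderiv ℝ (fderiv ℝ f) x (Pi.single a 1) (Pi.single b 1) := by
    intro a b
    show fderiv ℝ (fun y => fderiv ℝ f y (Pi.single b 1)) x (Pi.single a 1) = _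
    rw [fderiv_clm_apply hd (differentiableAt_const _)]
    simp
  rw [key i j, key j i, hsymm]

/-- generic tactic-friendly swap commute -/
lemma comp_swap_comm (x : Fin N → ℝ) {i j k l : Fin N}
    (hij : i ≠ j) (hil : i ≠ l) (hkj : k ≠ j) (hkl : k ≠ l) :
    x ∘ Equiv.swap i k ∘ Equiv.swap j l = x ∘ Equiv.swap j l ∘ Equiv.swap i k := by
  have h1 := hij.symm; have h2 := hil.symm; have h3 := hkj.symm; have h4 := hkl.symm
  funext m
  simp only [Function.comp_apply]
  congr 1
  by_cases e1 : m = i <;> by_cases e2 : m = j <;> by_cases e3 : m = k <;> by_cases e4 : m = l <;>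
    simp_all [Equiv.swap_apply_of_ne_of_ne, Equiv.swap_apply_left, Equiv.swap_apply_right]

lemma cyc1 (x : Fin N → ℝ) {i j m : Fin N} (hij : i ≠ j) (him : i ≠ m) (hjm : j ≠ m) :
    x ∘ Equiv.swap i m ∘ Equiv.swap j i = x ∘ Equiv.swap i j ∘ Equiv.swap j m := by
  have h1 := hij.symm; have h2 := him.symm; have h3 := hjm.symm
  funext n
  simp only [Function.comp_apply]
  congr 1
  by_cases e1 : n = i <;> by_cases e2 : n = j <;> by_cases e3 : n = m <;>
    simp_all [Equiv.swap_apply_of_ne_of_ne, Equiv.swap_apply_left, Equiv.swap_apply_right]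

lemma cyc2 (x : Fin N → ℝ) {i j m : Fin N} (hij : i ≠ j) (him : i ≠ m) (hjm : j ≠ m) :
    x ∘ Equiv.swap j i ∘ Equiv.swap i m = x ∘ Equiv.swap i m ∘ Equiv.swap j m := by
  have h1 := hij.symm; have h2 := him.symm; have h3 := hjm.symm
  funext n
  simp only [Function.comp_apply]
  congr 1
  by_cases e1 : n = i <;> by_cases e2 : n = j <;> by_cases e3 : n = m <;>
    simp_all [Equiv.swap_apply_of_ne_of_ne, Equiv.swap_apply_left, Equiv.swap_apply_right]

lemma cyc3 (x : Fin N → ℝ) {i j m : Fin N} (hij : i ≠ j) (him : i ≠ m) (hjm : j ≠ m) :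
    x ∘ Equiv.swap j m ∘ Equiv.swap i j = x ∘ Equiv.swap i m ∘ Equiv.swap j m := by
  have h1 := hij.symm; have h2 := him.symm; have h3 := hjm.symm
  funext n
  simp only [Function.comp_apply]
  congr 1
  by_cases e1 : n = i <;> by_cases e2 : n = j <;> by_cases e3 : n = m <;>
    simp_all [Equiv.swap_apply_of_ne_of_ne, Equiv.swap_apply_left, Equiv.swap_apply_right]

lemma cyc4 (x : Fin N → ℝ) {i j m : Fin N} (hij : i ≠ j) (him : i ≠ m) (hjm : j ≠ m) :
    x ∘ Equiv.swap j m ∘ Equiv.swap i m = x ∘ Equiv.swap i j ∘ Equiv.swap j m := by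
  have h1 := hij.symm; have h2 := him.symm; have h3 := hjm.symm
  funext n
  simp only [Function.comp_apply]
  congr 1
  by_cases e1 : n = i <;> by_cases e2 : n = j <;> by_cases e3 : n = m <;>
    simp_all [Equiv.swap_apply_of_ne_of_ne, Equiv.swap_apply_left, Equiv.swap_apply_right]

lemma comp_swap_swap_self (x : Fin N → ℝ) (i j : Fin N) :
    x ∘ Equiv.swap i j ∘ Equiv.swap j i = x := by
  funext n
  simp [Function.comp_apply, Equiv.swap_comm i j, Equiv.swap_apply_self]

/-- one summand in the double-sum expansion of `Delta i (Delta j f)` -/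
def Gterm (f : (Fin N → ℝ) → ℝ) (x : Fin N → ℝ) (i j k l : Fin N) : ℝ :=
  ((f x - f (x ∘ Equiv.swap j l)) / (x j - x l)
    - (f (x ∘ Equiv.swap i k) - f (x ∘ Equiv.swap i k ∘ Equiv.swap j l))
        / (x (Equiv.swap i k j) - x (Equiv.swap i k l))) / (x i - x k)

lemma Delta_Delta_eq_sum (f : (Fin N → ℝ) → ℝ) (x : Fin N → ℝ) (i j : Fin N) :
    Delta i (Delta j f) x
      = ∑ k ∈ Finset.univ.erase i, ∑ l ∈ Finset.univ.erase j, Gterm f x i j k l := by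
  unfold Delta Gterm
  refine Finset.sum_congr rfl fun k _ => ?_
  rw [← Finset.sum_sub_distrib, Finset.sum_div]
  rfl


lemma Gterm_pair {f : (Fin N → ℝ) → ℝ} {x : Fin N → ℝ} (hx : x ∈ Omega N)
    {i j : Fin N} (hij : i ≠ j) :
    Gterm f x i j j i = Gterm f x j i i j := by
  have hab : x i - x j ≠ 0 := coord_ne hx hij
  have hba : x j - x i ≠ 0 := coord_ne hx hij.symm
  unfold Gterm
  rw [comp_swap_swap_self x i j, comp_swap_swap_self x j i, Equiv.swap_comm j i]
  simp only [Equiv.swap_apply_left, Equiv.swap_apply_right]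
  field_simp
  ring

lemma Gterm_generic {f : (Fin N → ℝ) → ℝ} {x : Fin N → ℝ} (hx : x ∈ Omega N)
    {i j k l : Fin N} (hij : i ≠ j) (hik : i ≠ k) (hil : i ≠ l) (hjk : j ≠ k)
    (hjl : j ≠ l) (hkl : k ≠ l) :
    Gterm f x i j k l = Gterm f x j i l k := by
  have d1 : x i - x k ≠ 0 := coord_ne hx hik
  have d2 : x j - x l ≠ 0 := coord_ne hx hjl
  unfold Gterm
  rw [comp_swap_comm x hij hil hjk.symm hkl,
    Equiv.swap_apply_of_ne_of_ne hij.symm hjk,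
    Equiv.swap_apply_of_ne_of_ne hil.symm hkl.symm,
    Equiv.swap_apply_of_ne_of_ne hij hil,
    Equiv.swap_apply_of_ne_of_ne hjk.symm hkl]
  field_simp
  ring

lemma Gterm_triple {f : (Fin N → ℝ) → ℝ} {x : Fin N → ℝ} (hx : x ∈ Omega N)
    {i j m : Fin N} (hij : i ≠ j) (him : i ≠ m) (hjm : j ≠ m) :
    Gterm f x i j j m + Gterm f x i j m i + Gterm f x i j m m
      = Gterm f x j i i m + Gterm f x j i m j + Gterm f x j i m m := by
  have d1 : x i - x j ≠ 0 := coord_ne hx hij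
  have d2 : x i - x m ≠ 0 := coord_ne hx him
  have d3 : x j - x m ≠ 0 := coord_ne hx hjm
  have d4 : x j - x i ≠ 0 := coord_ne hx hij.symm
  have d5 : x m - x i ≠ 0 := coord_ne hx him.symm
  have d6 : x m - x j ≠ 0 := coord_ne hx hjm.symm
  unfold Gterm
  rw [cyc1 x hij him hjm, cyc2 x hij him hjm, cyc3 x hij him hjm, cyc4 x hij him hjm,
    Equiv.swap_comm j i]
  simp only [Equiv.swap_apply_left, Equiv.swap_apply_right,
    Equiv.swap_apply_of_ne_of_ne him.symm hjm.symm,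
    Equiv.swap_apply_of_ne_of_ne hij.symm hjm,
    Equiv.swap_apply_of_ne_of_ne hij him]
  field_simp
  ring

lemma double_sum_decomp (F : Fin N → Fin N → ℝ) {i j : Fin N} (hij : i ≠ j) :
    ∑ k ∈ Finset.univ.erase i, ∑ l ∈ Finset.univ.erase j, F k l
      = F j i + (∑ m ∈ (Finset.univ.erase i).erase j, (F j m + F m i + F m m))
        + ∑ k ∈ (Finset.univ.erase i).erase j,
            ∑ l ∈ ((Finset.univ.erase i).erase j).erase k, F k l := by
  have hji : j ∈ Finset.univ.erase i := by simp [hij.symm]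
  have hiU : i ∈ Finset.univ.erase j := by simp [hij]
  have hU : (Finset.univ.erase j).erase i = (Finset.univ.erase i).erase j :=
    Finset.erase_right_comm
  rw [← Finset.add_sum_erase _ _ hji, ← Finset.add_sum_erase _ _ hiU, hU]
  have hinner : ∀ k ∈ (Finset.univ.erase i).erase j,
      ∑ l ∈ Finset.univ.erase j, F k l
        = F k i + (F k k + ∑ l ∈ ((Finset.univ.erase i).erase j).erase k, F k l) := by
    intro k hk
    have hki : k ≠ i := by
      have := Finset.mem_erase.mp hk; exact (Finset.mem_erase.mp this.2).1
    have hkj : k ≠ j := (Finset.mem_erase.mp hk).1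
    have hkU : k ∈ (Finset.univ.erase j).erase i := by simp [hki, hkj]
    rw [← Finset.add_sum_erase _ _ hiU, hU, ← Finset.add_sum_erase _ _ (hU ▸ hkU)]
  rw [Finset.sum_congr rfl hinner, Finset.sum_add_distrib, Finset.sum_add_distrib,
    show (∑ m ∈ (Finset.univ.erase i).erase j, (F j m + F m i + F m m))
        = (∑ m ∈ (Finset.univ.erase i).erase j, F j m)
          + (∑ m ∈ (Finset.univ.erase i).erase j, F m i)
          + (∑ m ∈ (Finset.univ.erase i).erase j, F m m) from by
      rw [Finset.sum_add_distrib, Finset.sum_add_distrib]]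
  ring

lemma Delta_Delta_comm {f : (Fin N → ℝ) → ℝ} {x : Fin N → ℝ} (hx : x ∈ Omega N)
    {i j : Fin N} (hij : i ≠ j) :
    Delta i (Delta j f) x = Delta j (Delta i f) x := by
  have hU : (Finset.univ.erase j).erase i = (Finset.univ.erase i).erase j :=
    Finset.erase_right_comm
  rw [Delta_Delta_eq_sum f x i j, Delta_Delta_eq_sum f x j i,
    double_sum_decomp _ hij, double_sum_decomp _ hij.symm, hU]
  have hmem : ∀ m ∈ (Finset.univ.erase i).erase j, m ≠ i ∧ m ≠ j := by
    intro m hm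
    have h1 := (Finset.mem_erase.mp hm).1
    have h2 := (Finset.mem_erase.mp (Finset.mem_erase.mp hm).2).1
    exact ⟨h2, h1⟩
  congr 1
  · congr 1
    · exact Gterm_pair hx hij
    · refine Finset.sum_congr rfl fun m hm => ?_
      obtain ⟨hmi, hmj⟩ := hmem m hm
      exact Gterm_triple hx hij hmi.symm hmj.symm
  · -- generic double sums
    rw [Finset.sum_comm' (t' := (Finset.univ.erase i).erase j)
      (s' := fun l => ((Finset.univ.erase i).erase j).erase l)
      (by
        intro k l
        simp only [Finset.mem_erase, Finset.mem_univ, and_true]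
        tauto)]
    refine Finset.sum_congr rfl fun k hk => Finset.sum_congr rfl fun l hl => ?_
    obtain ⟨hki, hkj⟩ := hmem k hk
    obtain ⟨hli, hlj⟩ := hmem l (Finset.mem_of_mem_erase hl)
    have hlk : l ≠ k := (Finset.mem_erase.mp hl).1
    exact Gterm_generic hx hij hli.symm hki.symm hlj.symm hkj.symm hlk

lemma commB (hf : ContDiffOn ℝ (⊤ : ℕ∞) f (Omega N)) {x : Fin N → ℝ} (hx : x ∈ Omega N)
    {i j : Fin N} (hij : i ≠ j) :
    pd i (Delta j f) x - Delta j (pd i f) x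
      = (pd i f (x ∘ Equiv.swap i j) - pd j f (x ∘ Equiv.swap i j)) / (x j - x i)
        + (f x - f (x ∘ Equiv.swap i j)) / (x j - x i) ^ 2 := by
  have hd : x j - x i ≠ 0 := coord_ne hx hij.symm
  have hDel : Delta j (pd i f) x
      = ∑ k ∈ Finset.univ.erase j, (pd i f x - pd i f (x ∘ Equiv.swap j k)) / (x j - x k) := rfl
  rw [pd_Delta hf hx i j, hDel, ← Finset.sum_sub_distrib]
  rw [Finset.sum_eq_single_of_mem i (by simp [hij])]
  · rw [Equiv.swap_apply_right, Equiv.swap_comm j i, Pi.single_eq_same,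
      Pi.single_eq_of_ne hij.symm]
    field_simp
    ring
  · intro k hk hki
    have hkj : k ≠ j := Finset.ne_of_mem_erase hk
    rw [Equiv.swap_apply_of_ne_of_ne hij hki.symm,
      Pi.single_eq_of_ne hij.symm, Pi.single_eq_of_ne hki]
    ring

lemma B_comm (hf : ContDiffOn ℝ (⊤ : ℕ∞) f (Omega N)) {x : Fin N → ℝ} (hx : x ∈ Omega N)
    {i j : Fin N} (hij : i ≠ j) :
    pd i (Delta j f) x + Delta i (pd j f) x
      = pd j (Delta i f) x + Delta j (pd i f) x := by
  have h1 := commB hf hx hij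
  have h2 := commB hf hx hij.symm
  have hd1 : x j - x i ≠ 0 := coord_ne hx hij.symm
  have hd2 : x i - x j ≠ 0 := coord_ne hx hij
  rw [Equiv.swap_comm j i] at h2
  have e : (pd i f (x ∘ Equiv.swap i j) - pd j f (x ∘ Equiv.swap i j)) / (x j - x i)
        + (f x - f (x ∘ Equiv.swap i j)) / (x j - x i) ^ 2
      = (pd j f (x ∘ Equiv.swap i j) - pd i f (x ∘ Equiv.swap i j)) / (x i - x j)
        + (f x - f (x ∘ Equiv.swap i j)) / (x i - x j) ^ 2 := by
    field_simp
    ring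
  linarith [h1, h2, e]

lemma pd_add_const_mul {φ ψ : (Fin N → ℝ) → ℝ} {x : Fin N → ℝ}
    (hφ : DifferentiableAt ℝ φ x) (hψ : DifferentiableAt ℝ ψ x) (g : ℝ) (i : Fin N) :
    pd i (fun y => φ y + g * ψ y) x = pd i φ x + g * pd i ψ x := by
  unfold pd
  rw [fderiv_fun_add hφ (hψ.const_mul g), fderiv_const_mul hψ]
  simp

lemma Delta_add_const_mul (i : Fin N) (φ ψ : (Fin N → ℝ) → ℝ) (g : ℝ) (x : Fin N → ℝ) :
    Delta i (fun y => φ y + g * ψ y) x = Delta i φ x + g * Delta i ψ x := by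
  unfold Delta
  rw [Finset.mul_sum, ← Finset.sum_add_distrib]
  refine Finset.sum_congr rfl fun k _ => ?_
  ring

theorem Dunkl_comm' {N : ℕ} (g : ℝ) (i j : Fin N)
    (f : (Fin N → ℝ) → ℝ) (hf : ContDiffOn ℝ (⊤ : ℕ∞) f (Omega N))
    (x : Fin N → ℝ) (hx : x ∈ Omega N) :
    pd i (fun y => pd j f y + g * Delta j f y) x
        + g * Delta i (fun y => pd j f y + g * Delta j f y) x
      = pd j (fun y => pd i f y + g * Delta i f y) x
        + g * Delta j (fun y => pd i f y + g * Delta i f y) x := by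
  by_cases hij : i = j
  · subst hij; rfl
  rw [pd_add_const_mul (diffAt_pd hf hx j) (differentiableAt_Delta hf hx j),
    pd_add_const_mul (diffAt_pd hf hx i) (differentiableAt_Delta hf hx i),
    Delta_add_const_mul, Delta_add_const_mul,
    pd_pd hf hx i j, Delta_Delta_comm hx hij]
  have hB := B_comm hf hx hij
  linear_combination g * hB


theorem Dunkl_comm {N : ℕ} (g : ℝ) (i j : Fin N)
    (f : (Fin N → ℝ) → ℝ) (hf : ContDiffOn ℝ (⊤ : ℕ∞) f (Omega N))
    (x : Fin N → ℝ) (hx : x ∈ Omega N) :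
    Dunkl g i (Dunkl g j f) x = Dunkl g j (Dunkl g i f) x := by
  exact Dunkl_comm' g i j f hf x hx
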